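/- arXiv:2312.00009 — 2 statements merged into one kernel-verified Lean document; each statement's English description precedes it below -/
import Mathlib

section
/- Let n be a positive natural number and let s_1, …, s_{n+1} : Ω → ℝ be real-valued random variables on a probability space (Ω, 𝒜, P) that are exchangeable, i.e., for every permutation σ of {1,…,n+1} the joint distribution of (s_{σ(1)}, …, s_{σ(n+1)}) equals the joint distribution of (s_1, …, s_{n+1}). Define the conformal p-value P_val(ω) = |{i ∈ {1,…,n+1} : s_i(ω) ≥ s_{n+1}(ω)}| / (n+1). Then for every α ∈ [0,1], P[{ω : P_val(ω) ≤ α}] ≤ α. -/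
open MeasureTheory
open scoped ENNReal

lemma card_low_rank {m : ℕ} (x : Fin m → ℝ) (k : ℕ) :
    (Finset.univ.filter (fun j : Fin m =>
      (Finset.univ.filter (fun i => x i ≥ x j)).card ≤ k)).card ≤ k := by
  set S := Finset.univ.filter (fun j : Fin m =>
      (Finset.univ.filter (fun i => x i ≥ x j)).card ≤ k) with hS
  rcases S.eq_empty_or_nonempty with h | h
  · simp [h]
  · obtain ⟨j₀, hj₀S, hmin⟩ := S.exists_min_image x h
    have hsub : S ⊆ Finset.univ.filter (fun i => x i ≥ x j₀) := by
      intro j hj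
      simp only [Finset.mem_filter, Finset.mem_univ, true_and]
      exact hmin j hj
    calc S.card ≤ _ := Finset.card_le_card hsub
      _ ≤ k := (Finset.mem_filter.mp hj₀S).2

/-- Validity of the conformal p-value under exchangeability: if the n+1 scores are
exchangeable, the p-value `|{i : s i ω ≥ s (last) ω}| / (n+1)` is a valid p-value. -/
theorem conformal_pvalue_valid
    {Ω : Type*} [MeasurableSpace Ω] (P : Measure Ω) [IsProbabilityMeasure P]
    (n : ℕ) (hn : 0 < n)
    (s : Fin (n + 1) → Ω → ℝ) (hs : ∀ i, Measurable (s i))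
    (hexch : ∀ σ : Equiv.Perm (Fin (n + 1)),
      Measure.map (fun ω => fun i => s (σ i) ω) P
        = Measure.map (fun ω => fun i => s i ω) P)
    (Pval : Ω → ℝ)
    (hPval : ∀ ω, Pval ω =
      ((Finset.univ.filter (fun i : Fin (n + 1) => s i ω ≥ s (Fin.last n) ω)).card : ℝ)
        / (n + 1)) :
    ∀ α ∈ Set.Icc (0 : ℝ) 1, P {ω | Pval ω ≤ α} ≤ ENNReal.ofReal α := by
  intro α hα
  obtain ⟨hα0, hα1⟩ := hα
  set k : ℕ := ⌊α * ((n : ℝ) + 1)⌋₊ with hk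
  have hmeas_s : Measurable (fun ω => fun i => s i ω) := measurable_pi_lambda _ hs
  set F := Measure.map (fun ω => fun i => s i ω) P with hF
  haveI : IsProbabilityMeasure F := Measure.isProbabilityMeasure_map hmeas_s.aemeasurable
  set A : Fin (n+1) → Set (Fin (n+1) → ℝ) := fun j =>
    {x | (Finset.univ.filter (fun i => x i ≥ x j)).card ≤ k} with hA
  have hAmeas : ∀ j, MeasurableSet (A j) := by
    intro j
    have hcard : Measurable (fun x : Fin (n+1) → ℝ =>
        (Finset.univ.filter (fun i => x i ≥ x j)).card) := by
      simp only [Finset.card_filter]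
      apply Finset.measurable_sum
      intro i _
      exact Measurable.ite
        (measurableSet_le (measurable_pi_apply j) (measurable_pi_apply i))
        measurable_const measurable_const
    exact hcard ((Set.to_countable {m : ℕ | m ≤ k}).measurableSet)
  have hev : {ω | Pval ω ≤ α} = (fun ω => fun i => s i ω) ⁻¹' (A (Fin.last n)) := by
    ext ω
    simp only [Set.mem_setOf_eq, Set.mem_preimage, hPval ω, hA]
    rw [div_le_iff₀ (by positivity),
      ← Nat.le_floor_iff (mul_nonneg hα0 (by positivity)), ← hk]
  have hsame : ∀ j, F (A j) = F (A (Fin.last n)) := by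
    intro j
    set σ := Equiv.swap j (Fin.last n) with hσ
    have hg : Measurable (fun x : Fin (n+1) → ℝ => fun i => x (σ i)) :=
      measurable_pi_lambda _ (fun i => measurable_pi_apply _)
    have h3 : Measure.map (fun x : Fin (n+1) → ℝ => fun i => x (σ i)) F = F := by
      rw [hF, Measure.map_map hg hmeas_s]
      exact hexch σ
    have h4 : F (A (Fin.last n))
        = F ((fun x : Fin (n+1) → ℝ => fun i => x (σ i)) ⁻¹' (A (Fin.last n))) := by
      conv_lhs => rw [← h3]
      rw [Measure.map_apply hg (hAmeas _)]
    have h5 : (fun x : Fin (n+1) → ℝ => fun i => x (σ i)) ⁻¹' (A (Fin.last n)) = A j := by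
      ext x
      simp only [Set.mem_preimage, hA, Set.mem_setOf_eq]
      have hcard : (Finset.univ.filter (fun i => x (σ i) ≥ x (σ (Fin.last n)))).card
          = (Finset.univ.filter (fun i => x i ≥ x (σ (Fin.last n)))).card := by
        apply Finset.card_equiv σ
        intro i
        simp
      rw [hcard, hσ, Equiv.swap_apply_right]
    rw [h4, h5]
  have hsum : ∑ j : Fin (n+1), F (A j) ≤ (k : ℝ≥0∞) := by
    have heq : ∑ j : Fin (n+1), F (A j)
        = ∫⁻ x, ∑ j : Fin (n+1), (A j).indicator (fun _ => (1:ℝ≥0∞)) x ∂F := by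
      rw [lintegral_finset_sum]
      · refine Finset.sum_congr rfl (fun j _ => ?_)
        rw [lintegral_indicator (hAmeas j)]
        simp
      · intro j _
        exact measurable_one.indicator (hAmeas j)
    rw [heq]
    calc ∫⁻ x, ∑ j : Fin (n+1), (A j).indicator (fun _ => (1:ℝ≥0∞)) x ∂F
        ≤ ∫⁻ _, (k:ℝ≥0∞) ∂F := by
          apply lintegral_mono
          intro x
          dsimp only
          have hval : ∑ j : Fin (n+1), (A j).indicator (fun _ => (1:ℝ≥0∞)) x
              = ((Finset.univ.filter (fun j => x ∈ A j)).card : ℝ≥0∞) := by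
            rw [Finset.card_filter]
            push_cast
            refine Finset.sum_congr rfl (fun j _ => ?_)
            by_cases h : x ∈ A j <;> simp [Set.indicator, h]
          rw [hval]
          have hfe : (Finset.univ.filter (fun j => x ∈ A j))
              = Finset.univ.filter (fun j : Fin (n+1) =>
                  (Finset.univ.filter (fun i => x i ≥ x j)).card ≤ k) := by
            simp [hA, Set.mem_setOf_eq]
          rw [hfe]
          exact_mod_cast Nat.cast_le.mpr (card_low_rank x k)
      _ = (k:ℝ≥0∞) := by simp
  have hne : ((n:ℝ≥0∞)+1) ≠ 0 := by simp
  have hnt : ((n:ℝ≥0∞)+1) ≠ ⊤ := by simp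
  have hmain : ((n:ℝ≥0∞) + 1) * F (A (Fin.last n)) ≤ (k : ℝ≥0∞) := by
    calc ((n:ℝ≥0∞)+1) * F (A (Fin.last n))
        = ∑ _j : Fin (n+1), F (A (Fin.last n)) := by
          simp [Finset.sum_const, mul_comm, Finset.card_univ]
      _ = ∑ j : Fin (n+1), F (A j) := Finset.sum_congr rfl (fun j _ => (hsame j).symm)
      _ ≤ (k:ℝ≥0∞) := hsum
  have hk2 : (k:ℝ≥0∞) ≤ ((n:ℝ≥0∞)+1) * ENNReal.ofReal α := by
    have hrw : ((n:ℝ≥0∞)+1) * ENNReal.ofReal α = ENNReal.ofReal (α * ((n:ℝ)+1)) := by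
      rw [mul_comm, ENNReal.ofReal_mul hα0]
      congr 1
      rw [ENNReal.ofReal_add (by positivity) zero_le_one, ENNReal.ofReal_one,
        ENNReal.ofReal_natCast]
    rw [hrw]
    calc (k:ℝ≥0∞) = ENNReal.ofReal (k:ℝ) := (ENNReal.ofReal_natCast k).symm
      _ ≤ _ := ENNReal.ofReal_le_ofReal (Nat.floor_le (mul_nonneg hα0 (by positivity)))
  have hfinal : F (A (Fin.last n)) ≤ ENNReal.ofReal α :=
    (ENNReal.mul_le_mul_iff_right hne hnt).mp (hmain.trans hk2)
  have hPeq : P {ω | Pval ω ≤ α} = F (A (Fin.last n)) := by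
    rw [hev, hF]
    exact (Measure.map_apply hmeas_s (hAmeas _)).symm
  rw [hPeq]
  exact hfinal
end

section
/- Let n be a positive natural number and let s_1, …, s_{n+1} : Ω → ℝ be exchangeable real-valued random variables on a probability space (Ω, 𝒜, P) such that almost surely all of s_1(ω), …, s_{n+1}(ω) are pairwise distinct. Then the rank of s_{n+1}, defined as R(ω) = |{i ∈ {1,…,n+1} : s_i(ω) ≥ s_{n+1}(ω)}|, is uniformly distributed on {1, 2, …, n+1}, i.e., P[R = k] = 1/(n+1) for every k ∈ {1,…,n+1}. -/
/-!
Swapping a coordinate `j` with the last one leaves the law of an exchangeable vector unchanged,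
so every coordinate has rank `k` with the same probability. On the almost sure event that the
scores are distinct, the ranks are a permutation of `{1, …, n + 1}`, so exactly one coordinate
has rank `k`: the `n + 1` equal probabilities sum to `1`.
-/

open MeasureTheory Finset Function

section Combinatorics

variable {ι α : Type*} [Fintype ι] [LinearOrder α]

def descRank (x : ι → α) (j : ι) : ℕ :=
  #{i | x j ≤ x i}

theorem descRank_mem_Icc (x : ι → α) (j : ι) : descRank x j ∈ Icc 1 (Fintype.card ι) :=
  mem_Icc.2 ⟨card_pos.2 ⟨j, by simp⟩, card_le_univ _⟩

theorem descRank_lt_of_lt {x : ι → α} {j j' : ι} (h : x j < x j') :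
    descRank x j' < descRank x j := by
  refine card_lt_card ((ssubset_iff_of_subset fun i hi => ?_).2 ⟨j, by simp, by simp [h]⟩)
  simp only [mem_filter, mem_univ, true_and] at hi ⊢
  exact h.le.trans hi

theorem descRank_injective {x : ι → α} (hx : Injective x) : Injective (descRank x) := by
  intro a b hab
  by_contra hne
  rcases (hx.ne hne).lt_or_gt with h | h
  · exact (descRank_lt_of_lt h).ne' hab
  · exact (descRank_lt_of_lt h).ne hab

theorem exists_descRank_eq {x : ι → α} (hx : Injective x) {k : ℕ}
    (hk : k ∈ Icc 1 (Fintype.card ι)) : ∃ j, descRank x j = k := by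
  have himage : univ.image (descRank x) = Icc 1 (Fintype.card ι) :=
    eq_of_subset_of_card_le (image_subset_iff.2 fun j _ => descRank_mem_Icc x j)
      (by simp [card_image_of_injective _ (descRank_injective hx)])
  simpa [← himage] using hk

theorem descRank_comp_perm (x : ι → α) (σ : Equiv.Perm ι) (j : ι) :
    descRank (x ∘ σ) j = descRank x (σ j) :=
  card_equiv σ (by simp)

end Combinatorics

section Probability

variable {ι α Ω : Type*} [Fintype ι] [LinearOrder α] [MeasurableSpace α] [TopologicalSpace α]
  [OpensMeasurableSpace α] [OrderClosedTopology α] [SecondCountableTopology α]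
  [MeasurableSpace Ω] {P : Measure Ω} {X : Ω → ι → α}

theorem measurable_descRank (j : ι) : Measurable fun x : ι → α => descRank x j := by
  simp only [descRank, card_filter]
  exact Finset.measurable_sum _ fun i _ => Measurable.ite
    (measurableSet_le (measurable_pi_apply j) (measurable_pi_apply i)) measurable_const
    measurable_const

theorem measurableSet_descRank_eq (hX : Measurable X) (j : ι) (k : ℕ) :
    MeasurableSet {ω | descRank (X ω) j = k} :=
  (measurable_descRank j).comp hX (measurableSet_singleton k)

variable (P X) in
def Exchangeable : Prop :=
  ∀ σ : Equiv.Perm ι, P.map (fun ω => X ω ∘ σ) = P.map X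

theorem Exchangeable.measure_descRank_eq (hexch : Exchangeable P X) (hX : Measurable X)
    (j j' : ι) (k : ℕ) :
    P {ω | descRank (X ω) j = k} = P {ω | descRank (X ω) j' = k} := by
  classical
  set σ := Equiv.swap j j'
  have hXσ : Measurable fun ω => X ω ∘ σ :=
    measurable_pi_lambda _ fun i => (measurable_pi_apply (σ i)).comp hX
  have hE := measurable_descRank (α := α) j' (measurableSet_singleton k)
  calc P {ω | descRank (X ω) j = k}
      = P {ω | descRank (X ω ∘ σ) j' = k} := by
        simp only [descRank_comp_perm, σ, Equiv.swap_apply_right]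
    _ = P.map (fun ω => X ω ∘ σ) {x | descRank x j' = k} := (Measure.map_apply hXσ hE).symm
    _ = P.map X {x | descRank x j' = k} := by rw [hexch σ]
    _ = P {ω | descRank (X ω) j' = k} := Measure.map_apply hX hE

/-- Almost surely exactly one coordinate has rank `k`. -/
theorem sum_measure_descRank_eq (hX : Measurable X) (hinj : ∀ᵐ ω ∂P, Injective (X ω))
    {k : ℕ} (hk : k ∈ Icc 1 (Fintype.card ι)) :
    ∑ j, P {ω | descRank (X ω) j = k} = P Set.univ := by
  rw [ae_iff] at hinj
  have hdisj : Set.Pairwise (univ : Finset ι)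
      (AEDisjoint P on fun j => {ω | descRank (X ω) j = k}) := by
    refine fun a _ b _ hab => measure_mono_null (fun ω hω => ?_) hinj
    exact fun h => hab (descRank_injective h (hω.1.trans hω.2.symm))
  have hcover : (⋃ j ∈ univ, {ω | descRank (X ω) j = k}) =ᵐ[P] Set.univ := by
    refine ae_eq_univ.2 (measure_mono_null (fun ω hω => ?_) hinj)
    refine fun h => hω ?_
    obtain ⟨j, hj⟩ := exists_descRank_eq h hk
    exact Set.mem_biUnion (mem_univ j) hj
  rw [← measure_biUnion_finset₀ hdisj
    fun j _ => (measurableSet_descRank_eq hX j k).nullMeasurableSet, measure_congr hcover]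

theorem Exchangeable.card_mul_measure_descRank_eq (hexch : Exchangeable P X)
    (hX : Measurable X) (hinj : ∀ᵐ ω ∂P, Injective (X ω)) (j : ι) {k : ℕ}
    (hk : k ∈ Icc 1 (Fintype.card ι)) :
    Fintype.card ι * P {ω | descRank (X ω) j = k} = P Set.univ := by
  rw [← sum_measure_descRank_eq hX hinj hk]
  simp [hexch.measure_descRank_eq hX _ j k]

end Probability

theorem conformal_rank_uniform_general
    {Ω : Type*} [MeasurableSpace Ω] (P : Measure Ω) [IsProbabilityMeasure P]
    (n : ℕ)
    (s : Fin (n + 1) → Ω → ℝ) (hs : ∀ i, Measurable (s i))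
    (hexch : ∀ σ : Equiv.Perm (Fin (n + 1)),
      Measure.map (fun ω => fun i => s (σ i) ω) P
        = Measure.map (fun ω => fun i => s i ω) P)
    (hdistinct : ∀ᵐ ω ∂P, ∀ i j : Fin (n + 1), i ≠ j → s i ω ≠ s j ω)
    (R : Ω → ℕ)
    (hR : ∀ ω, R ω =
      (Finset.univ.filter (fun i : Fin (n + 1) => s i ω ≥ s (Fin.last n) ω)).card) :
    ∀ k ∈ Finset.Icc 1 (n + 1), P {ω | R ω = k} = ((n : ENNReal) + 1)⁻¹ := by
  intro k hk
  set X : Ω → Fin (n + 1) → ℝ := fun ω i => s i ω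
  have hX : Measurable X := measurable_pi_lambda _ hs
  have hinj : ∀ᵐ ω ∂P, Injective (X ω) :=
    hdistinct.mono fun ω h i j hij => by_contra fun hne => h i j hne hij
  have hR' : {ω | R ω = k} = {ω | descRank (X ω) (Fin.last n) = k} := by
    ext ω; simp only [Set.mem_ofPred_eq, hR, descRank, X]
  have hexch' : Exchangeable P X := hexch
  have key := hexch'.card_mul_measure_descRank_eq hX hinj (Fin.last n) (by simpa using hk)
  rw [Fintype.card_fin, measure_univ, ← hR'] at key
  exact ENNReal.eq_inv_of_mul_eq_one_left (by rw [mul_comm]; exact_mod_cast key)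

/-- Rank-uniformity lemma: for exchangeable, almost surely pairwise distinct scores
`s 0, …, s n`, the rank `R ω = |{i : s i ω ≥ s (last) ω}|` of the last score is
uniformly distributed on `{1, …, n+1}`. -/
theorem conformal_rank_uniform
    {Ω : Type*} [MeasurableSpace Ω] (P : Measure Ω) [IsProbabilityMeasure P]
    (n : ℕ) (hn : 0 < n)
    (s : Fin (n + 1) → Ω → ℝ) (hs : ∀ i, Measurable (s i))
    (hexch : ∀ σ : Equiv.Perm (Fin (n + 1)),
      Measure.map (fun ω => fun i => s (σ i) ω) P
        = Measure.map (fun ω => fun i => s i ω) P)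
    (hdistinct : ∀ᵐ ω ∂P, ∀ i j : Fin (n + 1), i ≠ j → s i ω ≠ s j ω)
    (R : Ω → ℕ)
    (hR : ∀ ω, R ω =
      (Finset.univ.filter (fun i : Fin (n + 1) => s i ω ≥ s (Fin.last n) ω)).card) :
    ∀ k ∈ Finset.Icc 1 (n + 1), P {ω | R ω = k} = ((n : ENNReal) + 1)⁻¹ :=
  conformal_rank_uniform_general P n s hs hexch hdistinct R hR
end
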